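/- Let R be a commutative ring, m ∈ R, n ≥ 2, and let a^{(e)}_{i,j} denote the (i,j) entry of T_n(m)^e. Then for every e ≥ 1 and every 1 ≤ i ≤ n: a^{(e)}_{i,2} = (n-i)·U_{e-1}^{n-i-1}·U_e^{i} + (i-1)·U_{e-1}^{n-i}·U_e^{i-2}·U_{e+1}, where the first summand is interpreted as 0 when i = n and the second as 0 when i = 1 (in those cases the integer coefficient n-i, respectively i-1, vanishes, which avoids negative exponents). -/
import Mathlib


/-- The generalized Fibonacci sequence with parameter `m`:
`U_0 = 0`, `U_1 = 1`, `U_{e+1} = m U_e + U_{e-1}`. -/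
def genFibU {R : Type*} [CommRing R] (m : R) : ℕ → R
  | 0 => 0
  | 1 => 1
  | e + 2 => m * genFibU m (e + 1) + genFibU m e

/-- The `n × n` generalized Fibonacci matrix `T_n(m)`, with 1-based `(i,j)` entry
`m^{i+j-n-1} C(i-1, n-j)` when `i + j ≥ n + 1` and `0` otherwise. -/
def genFibMatrix {R : Type*} [CommRing R] (m : R) (n : ℕ) :
    Matrix (Fin n) (Fin n) R :=
  Matrix.of fun i j =>
    if n ≤ i.val + j.val + 1 then
      m ^ (i.val + j.val + 1 - n) * (Nat.choose i.val (n - 1 - j.val) : R)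
    else 0


/-- Auxiliary column function: the conjectured second column of `T^e`,
with `a = U_{e-1}`, `b = U_e` (so `m*b+a = U_{e+1}`). -/
def gfCol {R : Type*} [CommRing R] (m : R) (n : ℕ) (a b : R) (k : ℕ) : R :=
  ((n - 1 - k : ℕ) : R) * a ^ (n - 2 - k) * b ^ (k + 1) +
    (k : R) * a ^ (n - 1 - k) * b ^ (k - 1) * (m * b + a)

/-- Binomial theorem in the shape we need. -/
lemma gf_binom {R : Type*} [CommRing R] (m a b : R) (j : ℕ) :
    ∑ t ∈ Finset.range (j + 1), (Nat.choose j t : R) * m ^ (j - t) * a ^ t * b ^ (j - t)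
      = (a + m * b) ^ j := by
  rw [add_pow]
  refine Finset.sum_congr rfl fun t ht => ?_
  rw [mul_pow]; ring

lemma gf_key_sum {R : Type*} [CommRing R] (m a b : R) (n i : ℕ) (hi : i < n) (hn : 2 ≤ n) :
    ∑ t ∈ Finset.range (i + 1), m ^ (i - t) * (Nat.choose i t : R) *
      ((t : R) * a ^ (t - 1) * b ^ (n - t) +
        ((n - 1 - t : ℕ) : R) * a ^ t * b ^ (n - 2 - t) * (m * b + a))
    = ((n - 1 - i : ℕ) : R) * b ^ (n - 2 - i) * (m * b + a) ^ (i + 1) +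
        (i : R) * b ^ (n - 1 - i) * (m * b + a) ^ (i - 1) * (m * (m * b + a) + b) := by
  have hsplit : ∑ t ∈ Finset.range (i + 1), m ^ (i - t) * (Nat.choose i t : R) *
      ((t : R) * a ^ (t - 1) * b ^ (n - t) +
        ((n - 1 - t : ℕ) : R) * a ^ t * b ^ (n - 2 - t) * (m * b + a))
      = (∑ t ∈ Finset.range (i + 1),
          (t : R) * (Nat.choose i t : R) * m ^ (i - t) * a ^ (t - 1) * b ^ (n - t))
        + ((((n - 1 - i : ℕ) : R) * ∑ t ∈ Finset.range (i + 1),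
            (Nat.choose i t : R) * m ^ (i - t) * a ^ t * b ^ (n - 2 - t) * (m * b + a))
          + ∑ t ∈ Finset.range (i + 1),
            ((i - t : ℕ) : R) * (Nat.choose i t : R) * m ^ (i - t) * a ^ t * b ^ (n - 2 - t)
              * (m * b + a)) := by
    rw [Finset.mul_sum, ← Finset.sum_add_distrib, ← Finset.sum_add_distrib]
    refine Finset.sum_congr rfl fun t ht => ?_
    have ht' : t ≤ i := Nat.lt_succ_iff.mp (Finset.mem_range.mp ht)
    have h1 : (n - 1 - t : ℕ) = (n - 1 - i) + (i - t) := by omega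
    rw [h1]
    push_cast
    ring
  rw [hsplit]
  -- Evaluate S1
  have e1 : ∑ t ∈ Finset.range (i + 1),
      (t : R) * (Nat.choose i t : R) * m ^ (i - t) * a ^ (t - 1) * b ^ (n - t)
      = (i : R) * b ^ (n - i) * (a + m * b) ^ (i - 1) := by
    rcases Nat.eq_zero_or_pos i with h0 | hpos
    · subst h0; simp
    · obtain ⟨j, rfl⟩ : ∃ j, i = j + 1 := ⟨i - 1, by omega⟩
      rw [Finset.sum_range_succ']
      simp only [Nat.cast_zero, zero_mul, add_zero]
      have : ∀ s ∈ Finset.range (j + 1),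
          ((s + 1 : ℕ) : R) * (Nat.choose (j + 1) (s + 1) : R) * m ^ (j + 1 - (s + 1))
            * a ^ (s + 1 - 1) * b ^ (n - (s + 1))
          = ((j + 1 : ℕ) : R) * b ^ (n - (j + 1)) *
              ((Nat.choose j s : R) * m ^ (j - s) * a ^ s * b ^ (j - s)) := by
        intro s hs
        have hs' : s ≤ j := Nat.lt_succ_iff.mp (Finset.mem_range.mp hs)
        have hc : (j + 1) * Nat.choose j s = Nat.choose (j + 1) (s + 1) * (s + 1) :=
          Nat.add_one_mul_choose_eq j s
        have hb : (n - (s + 1) : ℕ) = (j - s) + (n - (j + 1)) := by omega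
        have hm : (j + 1 - (s + 1) : ℕ) = j - s := by omega
        have ha : (s + 1 - 1 : ℕ) = s := rfl
        rw [hb, pow_add, hm, ha]
        have hcR : ((j + 1 : ℕ) : R) * (Nat.choose j s : R)
            = (Nat.choose (j + 1) (s + 1) : R) * ((s + 1 : ℕ) : R) := by
          exact_mod_cast congrArg (Nat.cast : ℕ → R) hc
        calc ((s + 1 : ℕ) : R) * (Nat.choose (j + 1) (s + 1) : R) * m ^ (j - s)
              * a ^ s * (b ^ (j - s) * b ^ (n - (j + 1)))
            = ((Nat.choose (j + 1) (s + 1) : R) * ((s + 1 : ℕ) : R)) * (m ^ (j - s)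
              * a ^ s * (b ^ (j - s) * b ^ (n - (j + 1)))) := by ring
          _ = (((j + 1 : ℕ) : R) * (Nat.choose j s : R)) * (m ^ (j - s)
              * a ^ s * (b ^ (j - s) * b ^ (n - (j + 1)))) := by rw [hcR]
          _ = ((j + 1 : ℕ) : R) * b ^ (n - (j + 1)) *
              ((Nat.choose j s : R) * m ^ (j - s) * a ^ s * b ^ (j - s)) := by ring
      rw [Finset.sum_congr rfl this, ← Finset.mul_sum, gf_binom]
      push_cast
      ring_nf
  -- Evaluate S2
  have e2 : ∑ t ∈ Finset.range (i + 1),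
      (Nat.choose i t : R) * m ^ (i - t) * a ^ t * b ^ (n - 2 - t) * (m * b + a)
      = b ^ (n - 2 - i) * (a + m * b) ^ i * (m * b + a) ∨ (n - 1 - i : ℕ) = 0 := by
    by_cases hcase : i = n - 1
    · exact Or.inr (by omega)
    · left
      have hi2 : i ≤ n - 2 := by omega
      have : ∀ t ∈ Finset.range (i + 1),
          (Nat.choose i t : R) * m ^ (i - t) * a ^ t * b ^ (n - 2 - t) * (m * b + a)
          = ((Nat.choose i t : R) * m ^ (i - t) * a ^ t * b ^ (i - t))
              * (b ^ (n - 2 - i) * (m * b + a)) := by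
        intro t ht
        have ht' : t ≤ i := Nat.lt_succ_iff.mp (Finset.mem_range.mp ht)
        have hb : (n - 2 - t : ℕ) = (i - t) + (n - 2 - i) := by omega
        rw [hb, pow_add]; ring
      rw [Finset.sum_congr rfl this, ← Finset.sum_mul, gf_binom]
      ring
  -- Evaluate S3
  have e3 : ∑ t ∈ Finset.range (i + 1),
      ((i - t : ℕ) : R) * (Nat.choose i t : R) * m ^ (i - t) * a ^ t * b ^ (n - 2 - t)
        * (m * b + a)
      = (i : R) * m * b ^ (n - 1 - i) * (a + m * b) ^ (i - 1) * (m * b + a) := by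
    rcases Nat.eq_zero_or_pos i with h0 | hpos
    · subst h0; simp
    · obtain ⟨j, rfl⟩ : ∃ j, i = j + 1 := ⟨i - 1, by omega⟩
      rw [Finset.sum_range_succ]
      simp only [Nat.sub_self, Nat.cast_zero, zero_mul, add_zero]
      have : ∀ t ∈ Finset.range (j + 1),
          ((j + 1 - t : ℕ) : R) * (Nat.choose (j + 1) t : R) * m ^ (j + 1 - t) * a ^ t
            * b ^ (n - 2 - t) * (m * b + a)
          = (((j + 1 : ℕ) : R) * m * b ^ (n - 2 - j) * (m * b + a)) *
              ((Nat.choose j t : R) * m ^ (j - t) * a ^ t * b ^ (j - t)) := by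
        intro t ht
        have ht' : t ≤ j := Nat.lt_succ_iff.mp (Finset.mem_range.mp ht)
        have hc : (j + 1) * Nat.choose j t = Nat.choose (j + 1) t * (j + 1 - t) :=
          (Nat.add_one_mul_choose_eq j t).trans (Nat.choose_succ_right_eq (j + 1) t)
        have hm : (j + 1 - t : ℕ) = (j - t) + 1 := by omega
        have hc2 : (j + 1) * Nat.choose j t = Nat.choose (j + 1) t * (j - t + 1) := by
          rw [← hm]; exact hc
        have hcR : ((j + 1 : ℕ) : R) * (Nat.choose j t : R)
            = (Nat.choose (j + 1) t : R) * ((j - t + 1 : ℕ) : R) := by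
          exact_mod_cast congrArg (Nat.cast : ℕ → R) hc2
        have hb : (n - 2 - t : ℕ) = (j - t) + (n - 2 - j) := by omega
        rw [hb, pow_add, hm, pow_add, pow_one]
        calc ((j - t + 1 : ℕ) : R) * (Nat.choose (j + 1) t : R) * (m ^ (j - t) * m) * a ^ t
              * (b ^ (j - t) * b ^ (n - 2 - j)) * (m * b + a)
            = ((Nat.choose (j + 1) t : R) * ((j - t + 1 : ℕ) : R)) * ((m ^ (j - t) * m) * a ^ t
              * (b ^ (j - t) * b ^ (n - 2 - j)) * (m * b + a)) := by ring
          _ = (((j + 1 : ℕ) : R) * (Nat.choose j t : R)) * ((m ^ (j - t) * m) * a ^ t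
              * (b ^ (j - t) * b ^ (n - 2 - j)) * (m * b + a)) := by rw [hcR]
          _ = (((j + 1 : ℕ) : R) * m * b ^ (n - 2 - j) * (m * b + a)) *
              ((Nat.choose j t : R) * m ^ (j - t) * a ^ t * b ^ (j - t)) := by ring
      rw [Finset.sum_congr rfl this, ← Finset.mul_sum, gf_binom]
      have hexp : (n - 2 - j : ℕ) = n - 1 - (j + 1) := by omega
      rw [hexp]
      push_cast
      ring_nf
  -- Combine
  rw [e1, e3]
  have hc' : a + m * b = m * b + a := add_comm a (m * b)
  rcases e2 with h2 | h2
  · rw [h2, hc']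
    rcases Nat.eq_zero_or_pos i with h0 | hpos
    · subst h0; simp; ring
    · obtain ⟨j, rfl⟩ : ∃ j, i = j + 1 := ⟨i - 1, by omega⟩
      have hb : (n - (j + 1) : ℕ) = (n - 1 - (j + 1)) + 1 := by omega
      rw [hb, pow_add, pow_one]
      have hs : (j + 1 - 1 : ℕ) = j := rfl
      rw [hs]
      ring
  · rw [h2]
    simp only [Nat.cast_zero, zero_mul, mul_zero, zero_add, add_zero]
    rw [hc']
    rcases Nat.eq_zero_or_pos i with h0 | hpos
    · subst h0; simp
    · obtain ⟨j, rfl⟩ : ∃ j, i = j + 1 := ⟨i - 1, by omega⟩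
      have hb : (n - (j + 1) : ℕ) = 1 := by omega
      rw [hb, pow_one]
      have hs : (j + 1 - 1 : ℕ) = j := rfl
      rw [hs]
      ring

/-- The key step: multiplying the matrix by the column `gfCol a b` gives `gfCol b (m*b+a)`. -/
lemma gf_mul_col {R : Type*} [CommRing R] (m : R) (n : ℕ) (hn : 2 ≤ n) (a b : R) (i : Fin n) :
    ∑ k : Fin n, genFibMatrix m n i k * gfCol m n a b k.val
      = gfCol m n b (m * b + a) i.val := by
  have hi : i.val < n := i.2
  have step1 : ∑ k : Fin n, genFibMatrix m n i k * gfCol m n a b k.val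
      = ∑ k ∈ Finset.range n,
          (fun k : ℕ => (if n ≤ i.val + k + 1 then
              m ^ (i.val + k + 1 - n) * (Nat.choose i.val (n - 1 - k) : R) else 0)
            * gfCol m n a b k) k := by
    rw [← Fin.sum_univ_eq_sum_range]
    rfl
  rw [step1, ← Finset.sum_range_reflect]
  have step2 : ∑ j ∈ Finset.range n,
      (fun k : ℕ => (if n ≤ i.val + k + 1 then
          m ^ (i.val + k + 1 - n) * (Nat.choose i.val (n - 1 - k) : R) else 0)
        * gfCol m n a b k) (n - 1 - j)
      = ∑ t ∈ Finset.range (i.val + 1), m ^ (i.val - t) * (Nat.choose i.val t : R) *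
          ((t : R) * a ^ (t - 1) * b ^ (n - t) +
            ((n - 1 - t : ℕ) : R) * a ^ t * b ^ (n - 2 - t) * (m * b + a)) := by
    rw [← Finset.sum_subset (Finset.range_subset_range.mpr (by omega : i.val + 1 ≤ n))]
    · refine Finset.sum_congr rfl fun t ht => ?_
      have ht' : t ≤ i.val := Nat.lt_succ_iff.mp (Finset.mem_range.mp ht)
      simp only
      have hcond : n ≤ i.val + (n - 1 - t) + 1 := by omega
      rw [if_pos hcond]
      have h1 : (i.val + (n - 1 - t) + 1 - n : ℕ) = i.val - t := by omega
      have h2 : (n - 1 - (n - 1 - t) : ℕ) = t := by omega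
      rw [h1, h2]
      unfold gfCol
      have h3 : (n - 1 - (n - 1 - t) : ℕ) = t := by omega
      have h4 : (n - 2 - (n - 1 - t) : ℕ) = t - 1 := by omega
      have h5 : (n - 1 - t + 1 : ℕ) = n - t := by omega
      have h6 : (n - 1 - t - 1 : ℕ) = n - 2 - t := by omega
      rw [h3, h4, h5, h6]
    · intro t ht hts
      have h1 : i.val + 1 ≤ t := by
        by_contra h
        exact hts (Finset.mem_range.mpr (by omega))
      have h2 : t < n := Finset.mem_range.mp ht
      simp only
      rw [if_neg (by omega)]
      exact zero_mul _
  rw [step2, gf_key_sum m a b n i.val hi hn]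
  unfold gfCol
  rfl

/-- Second column of `T_n(m)^e` (1-based row index `i = i.val + 1`):
`a^{(e)}_{i,2} = (n-i) U_{e-1}^{n-i-1} U_e^{i} + (i-1) U_{e-1}^{n-i} U_e^{i-2} U_{e+1}`,
the first summand vanishing when `i = n` (coefficient `n - i = 0`) and the second when
`i = 1` (coefficient `i - 1 = 0`). -/
theorem genFibMatrix_pow_second_col {R : Type*} [CommRing R] (m : R) (n : ℕ) (hn : 2 ≤ n) :
    ∀ e : ℕ, 1 ≤ e → ∀ i : Fin n,
      ((genFibMatrix m n) ^ e) i ⟨1, by omega⟩ =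
        ((n - i.val - 1 : ℕ) : R) * genFibU m (e - 1) ^ (n - i.val - 2) *
            genFibU m e ^ (i.val + 1) +
          ((i.val : ℕ) : R) * genFibU m (e - 1) ^ (n - 1 - i.val) *
            genFibU m e ^ (i.val - 1) * genFibU m (e + 1) := by
  have main : ∀ e : ℕ, ∀ i : Fin n,
      ((genFibMatrix m n) ^ (e + 1)) i ⟨1, by omega⟩
        = gfCol m n (genFibU m e) (genFibU m (e + 1)) i.val := by
    intro e
    induction e with
    | zero =>
      intro i
      rw [pow_one]
      have hcol : ∀ k : Fin n, gfCol m n 1 0 k.val = if k.val = 1 then 1 else 0 := by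
        intro k
        unfold gfCol
        rcases Nat.lt_or_ge k.val 2 with hk | hk
        · interval_cases h : k.val <;> simp
        · rw [if_neg (by omega)]
          have h1 : (0 : R) ^ (k.val + 1) = 0 := zero_pow (by omega)
          have h2 : (0 : R) ^ (k.val - 1) = 0 := zero_pow (by omega)
          rw [h1, h2]
          ring
      have hstep := gf_mul_col m n hn 1 0 i
      have hlhs : ∑ k : Fin n, genFibMatrix m n i k * gfCol m n 1 0 k.val
          = genFibMatrix m n i ⟨1, by omega⟩ := by
        rw [Finset.sum_eq_single (⟨1, by omega⟩ : Fin n)]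
        · rw [hcol, if_pos rfl, mul_one]
        · intro k _ hk
          rw [hcol, if_neg (fun h => hk (Fin.ext h)), mul_zero]
        · intro h; exact absurd (Finset.mem_univ _) h
      rw [← hlhs, hstep]
      norm_num
      rfl
    | succ e ih =>
      intro i
      rw [pow_succ', Matrix.mul_apply]
      have : ∀ k : Fin n, genFibMatrix m n i k * ((genFibMatrix m n) ^ (e + 1)) k ⟨1, by omega⟩
          = genFibMatrix m n i k * gfCol m n (genFibU m e) (genFibU m (e + 1)) k.val := by
        intro k; rw [ih k]
      rw [Finset.sum_congr rfl (fun k _ => this k), gf_mul_col m n hn]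
      have hU : m * genFibU m (e + 1) + genFibU m e = genFibU m (e + 2) := rfl
      rw [hU]
  intro e he i
  obtain ⟨e', rfl⟩ : ∃ e', e = e' + 1 := ⟨e - 1, by omega⟩
  rw [main e' i]
  unfold gfCol
  have h1 : (e' + 1 - 1 : ℕ) = e' := rfl
  have h2 : (n - 2 - i.val : ℕ) = n - i.val - 2 := by omega
  have h3 : (n - 1 - i.val : ℕ) = n - i.val - 1 := by omega
  have hU : m * genFibU m (e' + 1) + genFibU m e' = genFibU m (e' + 1 + 1) := rfl
  rw [h1, h2, h3, hU]
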